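/- arXiv:2412.15463 — 4 statements merged into one kernel-verified Lean document; each statement's English description precedes it below -/
import Mathlib

section
/- Let d ≥ 3, Ω = {1,…,d}, and let F ≤ F' ≤ Sym(Ω) be permutation groups such that every element of F' maps each F-orbit onto itself and F' acts 2-transitively on Ω (this forces F to be transitive, hence nontrivial). Let T be a legally colored d-regular tree. Then there exists a geodesic line L in T such that the setwise stabilizer H of L in G(F,F') contains an element t with t·L(i) = L(i+2) for all i ∈ ℤ and an element r with r·L(i) = L(−i) for all i ∈ ℤ; consequently H acts transitively on the geometric edges of L. -/
/-- The automorphism group of a simple graph, as a subgroup of the permutation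
group of its vertex set. -/
def SimpleGraph.autSubgroup {V : Type*} (T : SimpleGraph V) : Subgroup (Equiv.Perm V) where
  carrier := {e | ∀ u v : V, T.Adj (e u) (e v) ↔ T.Adj u v}
  one_mem' := fun _ _ => Iff.rfl
  mul_mem' := by
    intro a b ha hb u v
    simp only [Equiv.Perm.mul_apply]
    rw [ha, hb]
  inv_mem' := by
    intro a ha u v
    simpa using (ha (a⁻¹ u) (a⁻¹ v)).symm

/-- A legal coloring of a `d`-regular tree: every vertex's edges are colored
bijectively with the colors `Fin d`. The color of the edge `{u, v}` is `color u v`. -/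
structure LegalColoring {V : Type*} (T : SimpleGraph V) (d : ℕ) where
  color : V → V → Fin d
  symm : ∀ ⦃u v : V⦄, T.Adj u v → color u v = color v u
  bij : ∀ (v : V) (i : Fin d), ∃! w : V, T.Adj v w ∧ color v w = i

/-- The local permutation `σ(g, v)` of an automorphism `g` at a vertex `v`
belongs to the permutation group `F`. -/
def LocalIn {V : Type*} {d : ℕ} (T : SimpleGraph V) (C : LegalColoring T d)
    (F : Subgroup (Equiv.Perm (Fin d))) (g : Equiv.Perm V) (v : V) : Prop :=
  ∃ π ∈ F, ∀ ⦃w : V⦄, T.Adj v w → C.color (g v) (g w) = π (C.color v w)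

/-- The universal Burger–Mozes group `U(F)` (as a set of permutations of the vertices):
automorphisms whose local permutation lies in `F` at every vertex. -/
def USet {V : Type*} {d : ℕ} (T : SimpleGraph V) (C : LegalColoring T d)
    (F : Subgroup (Equiv.Perm (Fin d))) : Set (Equiv.Perm V) :=
  {g | g ∈ T.autSubgroup ∧ ∀ v : V, LocalIn T C F g v}

/-- The group `G(F)`: automorphisms whose local permutation lies in `F` at all but
finitely many vertices. -/
def GSet {V : Type*} {d : ℕ} (T : SimpleGraph V) (C : LegalColoring T d)
    (F : Subgroup (Equiv.Perm (Fin d))) : Set (Equiv.Perm V) :=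
  {g | g ∈ T.autSubgroup ∧ {v : V | ¬ LocalIn T C F g v}.Finite}

/-- Le Boudec's group `G(F, F')` with almost prescribed local action (as a set of
permutations of the vertices): `G(F) ∩ U(F')`. -/
def GFFSet {V : Type*} {d : ℕ} (T : SimpleGraph V) (C : LegalColoring T d)
    (F F' : Subgroup (Equiv.Perm (Fin d))) : Set (Equiv.Perm V) :=
  GSet T C F ∩ USet T C F'

/-!
The group `F` is transitive, so it contains `π` with `π a ≠ a`. Let `L` be the line through `v`
whose edge colours read `a, π a, a, π a, …` on one side of `v` and `π a, π² a, π a, …` on the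
other. Propagate local permutations outwards from a base vertex by the rule using `π` across
pairs of colours `(j, π j)`, `π⁻¹` across `(π k, k)` and some element of `F` elsewhere: this
extends any permutation at the base vertex to an automorphism whose local permutations lie in
`F` away from the base vertex. Extending at `v` a swap in `F'` of `a` and `π a` reflects `L` in
`L 0`; extending at `L (-1)` a swap of `π a` and `π² a` reflects `L` in `L (-1)`. The product
of the two reflections translates `L` by `2`, and a translation by `2` together with a
reflection moves any edge of `L` onto any other.
-/

open Equiv

lemma List.isChain_ne_concat_or_eq_concat {α : Type*} {w : List α} (hw : w.IsChain (· ≠ ·))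
    (j : α) : (w ++ [j]).IsChain (· ≠ ·) ∨ ∃ w', w = w' ++ [j] := by
  rcases w.eq_nil_or_concat' with rfl | ⟨w', x, rfl⟩
  · exact .inl (.singleton j)
  · by_cases hx : x = j
    · exact .inr ⟨w', hx ▸ rfl⟩
    · exact .inl (hw.append (.singleton j) (by simp [hx]))

section Words

variable {α : Type*}

def alternating (x y : α) : ℕ → List α
  | 0 => []
  | n + 1 => x :: alternating y x n

lemma alternating_succ (x y : α) (n : ℕ) : alternating x y (n + 1) = x :: alternating y x n := rfl

@[simp] lemma length_alternating (x y : α) (n : ℕ) : (alternating x y n).length = n := by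
  induction n generalizing x y with
  | zero => rfl
  | succ n ih => simp [alternating_succ, ih]

lemma exists_alternating_succ_eq_concat (x y : α) (n : ℕ) :
    ∃ z, alternating x y (n + 1) = alternating x y n ++ [z] := by
  induction n generalizing x y with
  | zero => exact ⟨x, rfl⟩
  | succ n ih =>
    obtain ⟨z, hz⟩ := ih y x
    exact ⟨z, by rw [alternating_succ, hz, alternating_succ, List.cons_append]⟩

lemma isChain_alternating {x y : α} (hxy : x ≠ y) (n : ℕ) :
    (alternating x y n).IsChain (· ≠ ·) := by
  induction n generalizing x y with
  | zero => exact .nil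
  | succ n ih =>
    cases n with
    | zero => exact .singleton x
    | succ n => exact .cons_cons hxy (ih hxy.symm)

def lineWord (x y x' y' : α) (k : ℤ) : List α :=
  if 0 ≤ k then alternating x y k.toNat else alternating x' y' (-k).toNat

@[simp] lemma lineWord_natCast (x y x' y' : α) (n : ℕ) :
    lineWord x y x' y' n = alternating x y n := by
  simp [lineWord]

@[simp] lemma lineWord_neg_natCast (x y x' y' : α) (n : ℕ) :
    lineWord x y x' y' (-n) = alternating x' y' n := by
  rcases n with _ | n
  · rfl
  · rw [lineWord, if_neg (by omega), neg_neg, Int.toNat_natCast]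

lemma natCast_eq_neg_of_alternating_eq {x y x' y' : α} (hx : x ≠ x') {m n : ℕ}
    (h : alternating x y m = alternating x' y' n) : (m : ℤ) = -n := by
  cases m with
  | zero => cases n with
    | zero => rfl
    | succ n => exact absurd (congrArg List.length h) (by simp)
  | succ m => cases n with
    | zero => exact absurd (congrArg List.length h) (by simp)
    | succ n => exact absurd (List.cons.inj h).1 hx

lemma eq_of_alternating_eq {x y : α} {m n : ℕ} (h : alternating x y m = alternating x y n) :
    m = n := by
  simpa using congrArg List.length h

lemma lineWord_injective {x y x' y' : α} (hx : x ≠ x') :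
    Function.Injective (lineWord x y x' y') := by
  intro k l hkl
  obtain ⟨m, rfl | rfl⟩ := Int.eq_nat_or_neg k <;> obtain ⟨n, rfl | rfl⟩ := Int.eq_nat_or_neg l <;>
    simp only [lineWord_natCast, lineWord_neg_natCast] at hkl
  · rw [eq_of_alternating_eq hkl]
  · exact natCast_eq_neg_of_alternating_eq hx hkl
  · have := natCast_eq_neg_of_alternating_eq hx hkl.symm; omega
  · rw [eq_of_alternating_eq hkl]

end Words

section Propagation

variable {α : Type*} (f : α → α → Perm α)

/-- The local permutation at the end of the colour word `w`, when it is `σ` at the start and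
crossing an edge of colour `x` whose image has colour `y` turns it into `f x y`. -/
def propagatedPerm (σ : Perm α) : List α → Perm α
  | [] => σ
  | x :: w => propagatedPerm (f x (σ x)) w

def propagatedWord (σ : Perm α) : List α → List α
  | [] => []
  | x :: w => σ x :: propagatedWord (f x (σ x)) w

def invFamily (j k : α) : Perm α := (f k j)⁻¹

variable {f}

lemma propagatedWord_cons (σ : Perm α) (x : α) (w : List α) :
    propagatedWord f σ (x :: w) = σ x :: propagatedWord f (f x (σ x)) w := rfl

lemma propagatedPerm_concat (σ : Perm α) (w : List α) (x : α) :
    propagatedPerm f σ (w ++ [x]) = f x (propagatedPerm f σ w x) := by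
  induction w generalizing σ with
  | nil => rfl
  | cons y w ih => exact ih _

lemma propagatedWord_concat (σ : Perm α) (w : List α) (x : α) :
    propagatedWord f σ (w ++ [x]) = propagatedWord f σ w ++ [propagatedPerm f σ w x] := by
  induction w generalizing σ with
  | nil => rfl
  | cons y w ih => exact congrArg (σ y :: ·) (ih _)

lemma propagatedPerm_mem {F : Subgroup (Perm α)} (hf : ∀ j k, f j k ∈ F) {σ : Perm α}
    (hσ : σ ∈ F) (w : List α) : propagatedPerm f σ w ∈ F := by
  induction w generalizing σ with
  | nil => exact hσ
  | cons x w ih => exact ih (hf _ _)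

lemma isChain_propagatedWord (hf : ∀ j k, f j k j = k) (σ : Perm α) {w : List α}
    (hw : w.IsChain (· ≠ ·)) : (propagatedWord f σ w).IsChain (· ≠ ·) := by
  induction w generalizing σ with
  | nil => exact .nil
  | cons x w ih =>
    cases w with
    | nil => exact .singleton _
    | cons y w =>
      rw [List.isChain_cons_cons] at hw
      rw [propagatedWord_cons, propagatedWord_cons]
      refine .cons_cons ?_ (ih _ hw.2)
      have hne := (f x (σ x)).injective.ne hw.1
      rwa [hf] at hne

lemma invFamily_apply_self (hf : ∀ j k, f j k j = k) (j k : α) : invFamily f j k j = k := by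
  rw [invFamily, Perm.inv_eq_iff_eq, hf]

@[simp] lemma invFamily_invFamily : invFamily (invFamily f) = f := by
  funext j k
  simp [invFamily]

lemma propagatedWord_invFamily (σ : Perm α) (w : List α) :
    propagatedWord (invFamily f) σ⁻¹ (propagatedWord f σ w) = w := by
  induction w generalizing σ with
  | nil => rfl
  | cons x w ih =>
    simp [propagatedWord_cons, invFamily, ih]

end Propagation

section Adapted

variable {α : Type*} [DecidableEq α]

def adaptedFamily (π : Perm α) (φ : α → α → Perm α) (j k : α) : Perm α :=
  if k = π j then π else if j = π k then π⁻¹ else φ j k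

variable {π : Perm α} {φ : α → α → Perm α}

lemma adaptedFamily_apply_self (hφ : ∀ j k, φ j k j = k) (j k : α) :
    adaptedFamily π φ j k j = k := by
  unfold adaptedFamily
  split_ifs with h₁ h₂
  · exact h₁.symm
  · rw [h₂, Perm.inv_eq_iff_eq]
  · exact hφ j k

lemma adaptedFamily_mem {F : Subgroup (Perm α)} (hπ : π ∈ F) (hφ : ∀ j k, φ j k ∈ F) (j k : α) :
    adaptedFamily π φ j k ∈ F := by
  unfold adaptedFamily
  split_ifs
  exacts [hπ, inv_mem hπ, hφ j k]

lemma adaptedFamily_apply_right (j : α) : adaptedFamily π φ j (π j) = π := if_pos rfl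

/-- When both branches apply, `π` swaps `u` and `π u`, so it agrees with `π⁻¹` here. -/
lemma adaptedFamily_apply_left {u w : α} (huw : w = π u ∨ u = π w) :
    adaptedFamily π φ (π u) u (π w) = w := by
  unfold adaptedFamily
  split_ifs with h₁ h₂
  · rcases huw with rfl | rfl
    · rw [← h₁]
    · exact (π.injective h₁).symm
  · simp
  · exact absurd rfl h₂

lemma propagatedWord_alternating {σ : Perm α} {x : α} (hσ : σ x = π x) (y : α) (n : ℕ) :
    propagatedWord (adaptedFamily π φ) σ (alternating x y n) = alternating (π x) (π y) n := by
  induction n generalizing σ x y with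
  | zero => rfl
  | succ n ih =>
    rw [alternating_succ, propagatedWord_cons, hσ, adaptedFamily_apply_right, ih rfl,
      alternating_succ]

lemma propagatedWord_alternating_inv {σ : Perm α} {u w : α} (hσ : σ (π u) = u)
    (huw : w = π u ∨ u = π w) (n : ℕ) :
    propagatedWord (adaptedFamily π φ) σ (alternating (π u) (π w) n) = alternating u w n := by
  induction n generalizing σ u w with
  | zero => rfl
  | succ n ih =>
    rw [alternating_succ, propagatedWord_cons, hσ,
      ih (adaptedFamily_apply_left huw) huw.symm, alternating_succ]

lemma propagatedWord_lineWord {σ : Perm α} {x y : α} (hσ : σ x = π x) (hσ' : σ (π x) = x)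
    (hxy : y = π x ∨ x = π y) (k : ℤ) :
    propagatedWord (adaptedFamily π φ) σ (lineWord x y (π x) (π y) k) =
      lineWord x y (π x) (π y) (-k) := by
  obtain ⟨n, rfl | rfl⟩ := Int.eq_nat_or_neg k
  · rw [lineWord_natCast, lineWord_neg_natCast, propagatedWord_alternating hσ]
  · rw [lineWord_neg_natCast, neg_neg, lineWord_natCast,
      propagatedWord_alternating_inv hσ' hxy]

end Adapted

lemma exists_mem_apply_eq_of_twoTransitive {α : Type*} [Nontrivial α] {F F' : Subgroup (Perm α)}
    (horb : ∀ π' ∈ F', ∀ i, ∃ π ∈ F, π i = π' i)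
    (h2t : ∀ i j k l : α, i ≠ j → k ≠ l → ∃ π ∈ F', π i = k ∧ π j = l) (j k : α) :
    ∃ π ∈ F, π j = k := by
  obtain ⟨x, hx⟩ := exists_ne j
  obtain ⟨y, hy⟩ := exists_ne k
  obtain ⟨π', hπ', hπ'j, -⟩ := h2t j x k y hx.symm hy.symm
  obtain ⟨π, hπ, hπj⟩ := horb π' hπ' j
  exact ⟨π, hπ, hπj.trans hπ'j⟩

section GFF

variable {V : Type*} {d : ℕ} {T : SimpleGraph V} {C : LegalColoring T d}
  {F : Subgroup (Perm (Fin d))}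

lemma localIn_one (v : V) : LocalIn T C F 1 v := ⟨1, F.one_mem, fun _ _ => rfl⟩

lemma LocalIn.mul {g h : Perm V} (hh : h ∈ T.autSubgroup) {v : V} (hhv : LocalIn T C F h v)
    (hgv : LocalIn T C F g (h v)) : LocalIn T C F (g * h) v := by
  obtain ⟨πh, hπh, hh_color⟩ := hhv
  obtain ⟨πg, hπg, hg_color⟩ := hgv
  refine ⟨πg * πh, mul_mem hπg hπh, fun w hw => ?_⟩
  rw [Perm.mul_apply, Perm.mul_apply, hg_color ((hh v w).mpr hw), hh_color hw, Perm.mul_apply]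

lemma LocalIn.inv {g : Perm V} (hg : g ∈ T.autSubgroup) {v : V}
    (hgv : LocalIn T C F g (g⁻¹ v)) : LocalIn T C F g⁻¹ v := by
  obtain ⟨π, hπ, hg_color⟩ := hgv
  refine ⟨π⁻¹, inv_mem hπ, fun w hw => ?_⟩
  have := hg_color ((T.autSubgroup.inv_mem hg v w).mpr hw)
  simp only [Perm.coe_inv, Equiv.apply_symm_apply] at this
  simp [this]

variable (T C F) in
def GFFSubgroup (F' : Subgroup (Perm (Fin d))) : Subgroup (Perm V) where
  carrier := GFFSet T C F F'
  one_mem' := ⟨⟨T.autSubgroup.one_mem, by simp [localIn_one]⟩, T.autSubgroup.one_mem, localIn_one⟩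
  mul_mem' := by
    rintro g h ⟨⟨hg, hgF⟩, -, hgF'⟩ ⟨⟨hh, hhF⟩, -, hhF'⟩
    refine ⟨⟨mul_mem hg hh, (hhF.union (hgF.preimage h.injective.injOn)).subset ?_⟩,
      mul_mem hg hh, fun v => (hhF' v).mul hh (hgF' (h v))⟩
    intro v hv
    by_contra hvF
    simp only [Set.mem_union, Set.mem_ofPred_eq, Set.mem_preimage, not_or, not_not] at hvF
    exact hv (hvF.1.mul hh hvF.2)
  inv_mem' := by
    rintro g ⟨⟨hg, hgF⟩, -, hgF'⟩
    refine ⟨⟨inv_mem hg, (hgF.image g).subset fun v hv => ⟨g⁻¹ v, ?_, g.apply_symm_apply v⟩⟩,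
      inv_mem hg, fun v => (hgF' (g⁻¹ v)).inv hg⟩
    exact fun hvF => hv (LocalIn.inv hg hvF)

end GFF

namespace LegalColoring

open SimpleGraph

variable {V : Type*} {d : ℕ} {T : SimpleGraph V} (C : LegalColoring T d)

noncomputable def nbr (v : V) (i : Fin d) : V := (C.bij v i).choose

noncomputable def follow : V → List (Fin d) → V
  | v, [] => v
  | v, i :: l => follow (C.nbr v i) l

variable {C}

lemma adj_nbr (v : V) (i : Fin d) : T.Adj v (C.nbr v i) := (C.bij v i).choose_spec.1.1

@[simp] lemma color_nbr (v : V) (i : Fin d) : C.color v (C.nbr v i) = i :=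
  (C.bij v i).choose_spec.1.2

lemma nbr_color {v w : V} (h : T.Adj v w) : C.nbr v (C.color v w) = w :=
  ((C.bij v _).choose_spec.2 w ⟨h, rfl⟩).symm

@[simp] lemma nbr_nbr (v : V) (i : Fin d) : C.nbr (C.nbr v i) i = v := by
  have h := nbr_color (C := C) (adj_nbr (C := C) v i).symm
  rwa [← C.symm (adj_nbr v i), color_nbr] at h

@[simp] lemma follow_cons (v : V) (i : Fin d) (l : List (Fin d)) :
    C.follow v (i :: l) = C.follow (C.nbr v i) l := rfl

lemma follow_concat (v : V) (l : List (Fin d)) (i : Fin d) :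
    C.follow v (l ++ [i]) = C.nbr (C.follow v l) i := by
  induction l generalizing v with
  | nil => rfl
  | cons j l ih => exact ih _

variable (C)

noncomputable def walkOf : (v : V) → (l : List (Fin d)) → T.Walk v (C.follow v l)
  | _, [] => .nil
  | v, i :: l => .cons (adj_nbr v i) (walkOf (C.nbr v i) l)

def colorsOf : {u v : V} → T.Walk u v → List (Fin d)
  | _, _, .nil => []
  | u, _, .cons (v := x) _ p => C.color u x :: colorsOf p

variable {C}

lemma follow_colorsOf {u v : V} (p : T.Walk u v) : C.follow u (C.colorsOf p) = v := by
  induction p with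
  | nil => rfl
  | cons h p ih => rw [colorsOf, follow_cons, nbr_color h]; exact ih

lemma colorsOf_walkOf (v : V) (l : List (Fin d)) : C.colorsOf (C.walkOf v l) = l := by
  induction l generalizing v with
  | nil => rfl
  | cons i l ih => exact congrArg₂ (· :: ·) (color_nbr v i) (ih _)

lemma colorsOf_copy {u v u' v' : V} (p : T.Walk u v) (hu : u = u') (hv : v = v') :
    C.colorsOf (p.copy hu hv) = C.colorsOf p := by
  subst hu hv; rfl

lemma color_eq_color_iff {u x y : V} (h : T.Adj u x) (h' : T.Adj x y) :
    C.color u x = C.color x y ↔ u = y := by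
  rw [C.symm h]
  exact ⟨fun he => by rw [← nbr_color h.symm, he, nbr_color h'], fun he => he ▸ rfl⟩

lemma isChain_colorsOf_iff {u v : V} (p : T.Walk u v) :
    (C.colorsOf p).IsChain (· ≠ ·) ↔ p.edges.IsChain (· ≠ ·) := by
  induction p with
  | nil => simp [colorsOf]
  | @cons u x v h p ih =>
    cases p with
    | nil => simp [colorsOf]
    | @cons x y v h' p =>
      simp only [colorsOf, Walk.edges_cons, List.isChain_cons_cons] at ih ⊢
      rw [ih, ne_eq, ne_eq, color_eq_color_iff h h', Sym2.eq_iff]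
      simp [h.ne]

lemma isPath_walkOf (hT : T.IsAcyclic) (v : V) {l : List (Fin d)} (hl : l.IsChain (· ≠ ·)) :
    (C.walkOf v l).IsPath := by
  rwa [hT.isPath_iff_isChain, ← isChain_colorsOf_iff, colorsOf_walkOf]

lemma eq_of_follow_eq (hT : T.IsAcyclic) {r : V} {l l' : List (Fin d)}
    (hl : l.IsChain (· ≠ ·)) (hl' : l'.IsChain (· ≠ ·)) (h : C.follow r l = C.follow r l') :
    l = l' := by
  have hp := (hT.subsingleton_path _ _).elim
    ⟨(C.walkOf r l).copy rfl h, by simpa using isPath_walkOf hT r hl⟩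
    ⟨C.walkOf r l', isPath_walkOf hT r hl'⟩
  simpa [colorsOf_copy, colorsOf_walkOf] using congrArg (C.colorsOf ·.1) hp

variable (C) in
/-- The colour word of the geodesic from `r` to `v` (junk if `v` is not reachable from `r`). -/
noncomputable def address (r v : V) : List (Fin d) :=
  Classical.epsilon fun l => l.IsChain (· ≠ ·) ∧ C.follow r l = v

lemma address_spec (hT : T.Preconnected) (r v : V) :
    (C.address r v).IsChain (· ≠ ·) ∧ C.follow r (C.address r v) = v := by
  refine Classical.epsilon_spec (p := fun l => l.IsChain (· ≠ ·) ∧ C.follow r l = v) ?_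
  classical
  let p := (hT r v).some.bypass
  have hp : p.IsPath := Walk.bypass_isPath _
  refine ⟨C.colorsOf p, ?_, follow_colorsOf p⟩
  rw [isChain_colorsOf_iff]
  exact (Walk.edges_nodup_of_support_nodup hp.support_nodup).isChain

lemma isChain_address (hT : T.Preconnected) (r v : V) : (C.address r v).IsChain (· ≠ ·) :=
  (address_spec hT r v).1

@[simp] lemma follow_address (hT : T.Preconnected) (r v : V) : C.follow r (C.address r v) = v :=
  (address_spec hT r v).2

lemma address_follow (hT : T.IsAcyclic) (r : V) {l : List (Fin d)} (hl : l.IsChain (· ≠ ·)) :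
    C.address r (C.follow r l) = l :=
  have hspec := Classical.epsilon_spec
    (p := fun l' => l'.IsChain (· ≠ ·) ∧ C.follow r l' = C.follow r l) ⟨l, hl, rfl⟩
  eq_of_follow_eq hT hspec.1 hl hspec.2

variable (C) in
/-- The automorphism sending `r` to `u` whose local permutation is `σ` at `r` and propagates
outwards from `r` by the rule `f`. -/
noncomputable def extension (hT : T.IsTree)
    {f : Fin d → Fin d → Perm (Fin d)} (hf : ∀ j k, f j k j = k) (r u : V) (σ : Perm (Fin d)) :
    Perm V where
  toFun v := C.follow u (propagatedWord f σ (C.address r v))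
  invFun v := C.follow r (propagatedWord (invFamily f) σ⁻¹ (C.address u v))
  left_inv v := by
    dsimp only
    rw [address_follow hT.isAcyclic u
      (isChain_propagatedWord hf σ (isChain_address hT.connected.preconnected r v)),
      propagatedWord_invFamily, follow_address hT.connected.preconnected]
  right_inv v := by
    dsimp only
    have := propagatedWord_invFamily (f := invFamily f) σ⁻¹ (C.address u v)
    rw [invFamily_invFamily, inv_inv] at this
    rw [address_follow hT.isAcyclic r (isChain_propagatedWord (invFamily_apply_self hf) σ⁻¹
      (isChain_address hT.connected.preconnected u v)), this,
      follow_address hT.connected.preconnected]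

variable {hT : T.IsTree} {f : Fin d → Fin d → Perm (Fin d)} {hf : ∀ j k, f j k j = k}

lemma extension_follow (r u : V) (σ : Perm (Fin d)) {l : List (Fin d)}
    (hl : l.IsChain (· ≠ ·)) :
    extension C hT hf r u σ (C.follow r l) = C.follow u (propagatedWord f σ l) :=
  congrArg (C.follow u ∘ propagatedWord f σ) (address_follow hT.isAcyclic r hl)

lemma extension_symm (r u : V) (σ : Perm (Fin d)) :
    (extension C hT hf r u σ).symm = extension C hT (invFamily_apply_self hf) u r σ⁻¹ :=
  Equiv.ext fun _ => rfl

lemma extension_nbr (r u : V) (σ : Perm (Fin d)) (v : V) (j : Fin d) :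
    extension C hT hf r u σ (C.nbr v j) =
      C.nbr (extension C hT hf r u σ v) (propagatedPerm f σ (C.address r v) j) := by
  have hv := follow_address (C := C) hT.connected.preconnected r v
  have hw := isChain_address (C := C) hT.connected.preconnected r v
  generalize C.address r v = w at hv hw ⊢
  subst hv
  rcases List.isChain_ne_concat_or_eq_concat hw j with hwj | ⟨w', rfl⟩
  · rw [← follow_concat, extension_follow r u σ hwj, extension_follow r u σ hw,
      propagatedWord_concat, follow_concat]
  · have hback : C.nbr (C.follow r (w' ++ [j])) j = C.follow r w' := by
      rw [follow_concat, nbr_nbr]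
    rw [hback, extension_follow r u σ hw.left_of_append,
      extension_follow r u σ hw, propagatedWord_concat, follow_concat, propagatedPerm_concat, hf,
      nbr_nbr]

lemma adj_extension (r u : V) (σ : Perm (Fin d)) {v w : V} (h : T.Adj v w) :
    T.Adj (extension C hT hf r u σ v) (extension C hT hf r u σ w) := by
  rw [← nbr_color h, extension_nbr]
  exact adj_nbr _ _

lemma extension_mem_autSubgroup (r u : V) (σ : Perm (Fin d)) :
    extension C hT hf r u σ ∈ T.autSubgroup := by
  intro v w
  refine ⟨fun h => ?_, adj_extension r u σ⟩
  have h' := adj_extension (C := C) (hT := hT) (hf := invFamily_apply_self hf) u r σ⁻¹ h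
  rwa [← extension_symm (hf := hf), Equiv.symm_apply_apply, Equiv.symm_apply_apply] at h'

lemma localIn_extension {F : Subgroup (Perm (Fin d))} (r u : V) (σ : Perm (Fin d)) {v : V}
    (hv : propagatedPerm f σ (C.address r v) ∈ F) : LocalIn T C F (extension C hT hf r u σ) v :=
  ⟨_, hv, fun w hw => by rw [← nbr_color hw, extension_nbr, color_nbr, nbr_color hw]⟩

lemma extension_mem_GFFSubgroup {F F' : Subgroup (Perm (Fin d))} (hFF' : F ≤ F')
    (hfF : ∀ j k, f j k ∈ F) (r u : V) {σ : Perm (Fin d)} (hσ : σ ∈ F') :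
    extension C hT hf r u σ ∈ GFFSubgroup T C F F' := by
  have hmem := extension_mem_autSubgroup (C := C) (hT := hT) (hf := hf) r u σ
  refine ⟨⟨hmem, (Set.finite_singleton r).subset fun v hv => ?_⟩, hmem,
    fun v => localIn_extension r u σ (propagatedPerm_mem (fun j k => hFF' (hfF j k)) hσ _)⟩
  by_contra hvr
  refine hv (localIn_extension r u σ ?_)
  cases hw : C.address r v with
  | nil => exact absurd (by rw [← follow_address hT.connected.preconnected r v, hw]; rfl) hvr
  | cons x w => exact propagatedPerm_mem hfF (hfF _ _) w

variable (C) in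
/-- The line through `v` with edge colours `x, y, x, …` towards `+∞` and `x', y', x', …`
towards `-∞`. -/
noncomputable def line (v : V) (x y x' y' : Fin d) (k : ℤ) : V :=
  C.follow v (lineWord x y x' y' k)

lemma adj_line (v : V) (x y x' y' : Fin d) (k : ℤ) :
    T.Adj (C.line v x y x' y' k) (C.line v x y x' y' (k + 1)) := by
  have adj_concat : ∀ (l : List (Fin d)) z, T.Adj (C.follow v l) (C.follow v (l ++ [z])) :=
    fun l z => by rw [follow_concat]; exact adj_nbr _ _
  obtain ⟨n, rfl | rfl⟩ := Int.eq_nat_or_neg k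
  · obtain ⟨z, hz⟩ := exists_alternating_succ_eq_concat x y n
    rw [line, line, ← Nat.cast_succ, lineWord_natCast, lineWord_natCast, hz]
    exact adj_concat _ z
  · cases n with
    | zero => exact adj_concat [] x
    | succ n =>
      obtain ⟨z, hz⟩ := exists_alternating_succ_eq_concat x' y' n
      rw [line, line, show -((n + 1 : ℕ) : ℤ) + 1 = -(n : ℤ) by push_cast; ring,
        lineWord_neg_natCast, lineWord_neg_natCast, hz]
      exact (adj_concat _ z).symm

lemma line_injective (hT : T.IsAcyclic) (v : V) {x y x' y' : Fin d} (hxy : x ≠ y) (hxy' : x' ≠ y')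
    (hxx' : x ≠ x') : Function.Injective (C.line v x y x' y') := by
  have hchain : ∀ k, (lineWord x y x' y' k).IsChain (· ≠ ·) := fun k => by
    obtain ⟨n, rfl | rfl⟩ := Int.eq_nat_or_neg k
    · simpa using isChain_alternating hxy n
    · simpa using isChain_alternating hxy' n
  intro k l hkl
  have := congrArg (C.address v) hkl
  rw [line, line, address_follow hT v (hchain k), address_follow hT v (hchain l)] at this
  exact lineWord_injective hxx' this

lemma line_nbr (v : V) (x y z : Fin d) (k : ℤ) :
    C.line (C.nbr v y) y x z y k = C.line v x y y z (k - 1) := by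
  obtain ⟨n, rfl | rfl⟩ := Int.eq_nat_or_neg k
  · cases n with
    | zero => rfl
    | succ n =>
      rw [line, line, lineWord_natCast, Nat.cast_succ, add_sub_cancel_right, lineWord_natCast,
        alternating_succ, follow_cons, nbr_nbr]
  · rw [line, line, show -(n : ℤ) - 1 = -((n + 1 : ℕ) : ℤ) by push_cast; ring,
      lineWord_neg_natCast, lineWord_neg_natCast, alternating_succ, follow_cons]

lemma extension_line {π : Perm (Fin d)} {φ : Fin d → Fin d → Perm (Fin d)}
    (hφ : ∀ j k, φ j k j = k) (v : V) {σ : Perm (Fin d)} {x y : Fin d} (hσ : σ x = π x)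
    (hσ' : σ (π x) = x) (hxy : y = π x ∨ x = π y) (hne : x ≠ y) (k : ℤ) :
    extension C hT (adaptedFamily_apply_self (π := π) hφ) v v σ (C.line v x y (π x) (π y) k) =
      C.line v x y (π x) (π y) (-k) := by
  have hchain : (lineWord x y (π x) (π y) k).IsChain (· ≠ ·) := by
    obtain ⟨n, rfl | rfl⟩ := Int.eq_nat_or_neg k
    · simpa using isChain_alternating hne n
    · simpa using isChain_alternating (π.injective.ne hne) n
  rw [line, extension_follow v v σ hchain, propagatedWord_lineWord hσ hσ' hxy, line]

end LegalColoring

section LineSymmetry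

variable {V : Type*} {L : ℤ → V}

lemma image_range_eq_of_apply_eq {h : Perm V} {φ : ℤ → ℤ} (hφ : φ.Surjective)
    (hh : ∀ i, h (L i) = L (φ i)) : (⇑h) '' Set.range L = Set.range L := by
  rw [← Set.range_comp, show ⇑h ∘ L = L ∘ φ from funext hh, hφ.range_comp]

lemma zpow_apply_of_apply_eq_add {t : Perm V} {n : ℤ} (ht : ∀ i, t (L i) = L (i + n)) (m : ℤ) :
    ∀ i, (t ^ m) (L i) = L (i + n * m) := by
  induction m using Int.induction_on with
  | zero => simp
  | succ m ih => intro i; rw [zpow_add_one, Perm.mul_apply, ht, ih]; ring_nf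
  | pred m ih =>
    intro i
    have hinv : t⁻¹ (L i) = L (i - n) := by rw [Perm.inv_eq_iff_eq, ht, sub_add_cancel]
    rw [zpow_sub_one, Perm.mul_apply, hinv, ih]; ring_nf

lemma exists_mem_image_range_eq_and_pair_eq {H : Subgroup (Perm V)} {t r : Perm V} (htH : t ∈ H)
    (ht : ∀ i, t (L i) = L (i + 2)) (hrH : r ∈ H) (hr : ∀ i, r (L i) = L (-i)) (i j : ℤ) :
    ∃ h ∈ H, (⇑h) '' Set.range L = Set.range L ∧
      ({h (L i), h (L (i + 1))} : Set V) = {L j, L (j + 1)} := by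
  have htm := zpow_apply_of_apply_eq_add ht
  rcases Int.even_or_odd' (j - i) with ⟨m, hm | hm⟩
  · refine ⟨t ^ m, zpow_mem htH m, image_range_eq_of_apply_eq (add_right_surjective _) (htm m), ?_⟩
    rw [htm, htm, show i + 2 * m = j by omega, show i + 1 + 2 * m = j + 1 by omega]
  · have hh : ∀ k, (t ^ (i + m + 1) * r) (L k) = L (-k + 2 * (i + m + 1)) := fun k => by
      rw [Perm.mul_apply, hr, htm]
    refine ⟨t ^ (i + m + 1) * r, mul_mem (zpow_mem htH _) hrH,
      image_range_eq_of_apply_eq (fun k => ⟨-k + 2 * (i + m + 1), by ring⟩) hh, ?_⟩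
    rw [hh, hh, Set.pair_comm, show -i + 2 * (i + m + 1) = j + 1 by omega,
      show -(i + 1) + 2 * (i + m + 1) = j by omega]

end LineSymmetry

open LegalColoring

/-- If `F'` is 2-transitive (and preserves the `F`-orbits), then there is a geodesic
line `L` whose setwise stabilizer in `G(F, F')` contains a translation of length 2
along `L` and a rotation of `L` around `L 0`; consequently the setwise stabilizer acts
transitively on the geometric edges of `L`. -/
theorem GFF_line_stabilizer_edge_transitive {V : Type*} (d : ℕ) (hd : 3 ≤ d)
    (F F' : Subgroup (Equiv.Perm (Fin d))) (hle : F ≤ F')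
    (horb : ∀ π' ∈ F', ∀ i : Fin d, ∃ π ∈ F, π i = π' i)
    (h2t : ∀ i j k l : Fin d, i ≠ j → k ≠ l → ∃ π ∈ F', π i = k ∧ π j = l)
    (T : SimpleGraph V) (hT : T.IsTree) (C : LegalColoring T d) :
    ∃ L : ℤ → V, Function.Injective L ∧ (∀ i : ℤ, T.Adj (L i) (L (i + 1))) ∧
      (∃ t ∈ GFFSet T C F F', (⇑t) '' Set.range L = Set.range L ∧
        ∀ i : ℤ, t (L i) = L (i + 2)) ∧
      (∃ r ∈ GFFSet T C F F', (⇑r) '' Set.range L = Set.range L ∧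
        ∀ i : ℤ, r (L i) = L (-i)) ∧
      (∀ i j : ℤ, ∃ h ∈ GFFSet T C F F', (⇑h) '' Set.range L = Set.range L ∧
        ({h (L i), h (L (i + 1))} : Set V) = {L j, L (j + 1)}) := by
  have : Nontrivial (Fin d) := Fin.nontrivial_iff_two_le.mpr (by omega)
  choose φ hφF hφ using exists_mem_apply_eq_of_twoTransitive horb h2t
  obtain ⟨v⟩ := hT.connected.nonempty
  obtain ⟨a, b, hab⟩ := exists_pair_ne (Fin d)
  obtain ⟨π, hπF, rfl⟩ := exists_mem_apply_eq_of_twoTransitive horb h2t a b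
  have hab' : π a ≠ π (π a) := π.injective.ne hab
  obtain ⟨σ, hσF', hσ, hσ'⟩ := h2t a (π a) (π a) a hab hab.symm
  obtain ⟨τ, hτF', hτ, hτ'⟩ := h2t (π a) (π (π a)) (π (π a)) (π a) hab' hab'.symm
  have hfF := adaptedFamily_mem hπF hφF
  set L := C.line v a (π a) (π a) (π (π a))
  -- the reflections of `L` in `L 0` and in `L (-1)`
  set r := extension C hT (adaptedFamily_apply_self hφ) v v σ
  set r' := extension C hT (adaptedFamily_apply_self hφ) (C.nbr v (π a)) (C.nbr v (π a)) τ
  have hr : ∀ i, r (L i) = L (-i) := extension_line hφ v hσ hσ' (.inl rfl) hab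
  have hr' : ∀ i, r' (L i) = L (-i - 2) := fun i => by
    have := extension_line (C := C) (hT := hT) hφ (C.nbr v (π a)) hτ hτ' (.inr rfl) hab.symm (i + 1)
    rwa [line_nbr, line_nbr, add_sub_cancel_right, show -(i + 1) - 1 = -i - 2 by ring] at this
  have hrG : r ∈ GFFSubgroup T C F F' := extension_mem_GFFSubgroup hle hfF v v hσF'
  have hr'G : r' ∈ GFFSubgroup T C F F' := extension_mem_GFFSubgroup hle hfF _ _ hτF'
  have ht : ∀ i, (r * r') (L i) = L (i + 2) := fun i => by
    rw [Perm.mul_apply, hr', hr, neg_sub, sub_neg_eq_add, add_comm]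
  exact ⟨L, line_injective hT.isAcyclic v hab hab' hab, adj_line v _ _ _ _,
    ⟨r * r', mul_mem hrG hr'G, image_range_eq_of_apply_eq (add_right_surjective 2) ht, ht⟩,
    ⟨r, hrG, image_range_eq_of_apply_eq neg_surjective hr, hr⟩,
    exists_mem_image_range_eq_and_pair_eq (mul_mem hrG hr'G) ht hrG hr⟩
end

section
/- Let G be a group acting by automorphisms and without inversions on a tree T, and let L be a geodesic line in T whose setwise stabilizer H in G acts transitively on the geometric edges of L. Let x ≠ y be vertices of T and suppose g, g' ∈ G satisfy g·[x,y] ⊆ L(ℤ) and g'·[x,y] ⊆ L(ℤ). Then there exists h ∈ H such that h·(g·z) = g'·z for every vertex z ∈ [x,y]. -/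
/-!
Let `x₁` be the neighbour of `x` on `[x, y]`. Both `g` and `g'` map the edge `{x, x₁}` onto a
geometric edge of `L`, so edge-transitivity gives `h` in the stabilizer of `L` with
`h g {x, x₁} = g' {x, x₁}` setwise, and since there are no inversions, `h g` and `g'` agree on
`x` and on `x₁`. For `z ∈ [x, y]`, the vertices `h g z` and `g' z` of `L` then have the same
distances to the adjacent vertices `g' x`, `g' x₁` of `L`, and on a geodesic line of a tree
(where `d(L i, L j) = |i - j|`) this forces them to coincide.
-/

namespace SimpleGraph

variable {V : Type*} {T : SimpleGraph V}

lemma IsAcyclic.length_eq_dist_of_isPath (hT : T.IsAcyclic) {u v : V} {p : T.Walk u v}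
    (hp : p.IsPath) : p.length = T.dist u v := by
  obtain ⟨q, hq, hql⟩ := p.reachable.exists_path_of_dist
  have hpq : p = q := congrArg Subtype.val ((hT.subsingleton_path u v).elim ⟨p, hp⟩ ⟨q, hq⟩)
  rw [← hql, hpq]

lemma Reachable.exists_adj_dist_add_eq {x y : V} (hr : T.Reachable x y) (hxy : x ≠ y) :
    ∃ z, T.Adj x z ∧ T.dist x z + T.dist z y = T.dist x y := by
  obtain ⟨p, hp⟩ := hr.exists_walk_length_eq_dist
  cases p with
  | nil => exact absurd rfl hxy
  | @cons _ z _ hadj q =>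
    refine ⟨z, hadj, ?_⟩
    have hq : T.dist z y ≤ q.length := dist_le q
    have htri := hadj.reachable.dist_triangle_left y
    rw [Walk.length_cons] at hp
    rw [dist_eq_one_iff_adj.mpr hadj] at htri ⊢
    omega

structure IsGeodesicLine (T : SimpleGraph V) (L : ℤ → V) : Prop where
  injective : Function.Injective L
  adj : ∀ i, T.Adj (L i) (L (i + 1))

namespace IsGeodesicLine

variable {L : ℤ → V}

def walk (hL : T.IsGeodesicLine L) (i : ℤ) : (n : ℕ) → T.Walk (L i) (L (i + n))
  | 0 => Walk.nil.copy rfl (by simp)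
  | n + 1 => (Walk.cons (hL.adj i) (hL.walk (i + 1) n)).copy rfl (by push_cast; ring_nf)

lemma length_walk (hL : T.IsGeodesicLine L) (i : ℤ) (n : ℕ) : (hL.walk i n).length = n := by
  induction n generalizing i with
  | zero => simp [walk]
  | succ n ih => simp [walk, ih]

lemma exists_eq_of_mem_support_walk (hL : T.IsGeodesicLine L) {i : ℤ} {n : ℕ} {v : V}
    (hv : v ∈ (hL.walk i n).support) : ∃ k, i ≤ k ∧ v = L k := by
  induction n generalizing i with
  | zero => exact ⟨i, le_rfl, by simpa [walk] using hv⟩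
  | succ n ih =>
    simp only [walk, Walk.support_copy, Walk.support_cons, List.mem_cons] at hv
    rcases hv with rfl | hv
    · exact ⟨i, le_rfl, rfl⟩
    · obtain ⟨k, hk, rfl⟩ := ih hv
      exact ⟨k, by omega, rfl⟩

lemma isPath_walk (hL : T.IsGeodesicLine L) (i : ℤ) (n : ℕ) : (hL.walk i n).IsPath := by
  induction n generalizing i with
  | zero => simp [walk]
  | succ n ih =>
    simp only [walk, Walk.isPath_copy, Walk.cons_isPath_iff]
    refine ⟨ih (i + 1), fun hmem => ?_⟩
    obtain ⟨k, hk, hLk⟩ := hL.exists_eq_of_mem_support_walk hmem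
    have := hL.injective hLk
    omega

lemma dist_eq (hL : T.IsGeodesicLine L) (hT : T.IsAcyclic) (i j : ℤ) :
    T.dist (L i) (L j) = (j - i).natAbs := by
  wlog hij : i ≤ j generalizing i j
  · rw [dist_comm, this j i (by omega)]
    omega
  obtain ⟨n, rfl⟩ : ∃ n : ℕ, j = i + n := ⟨(j - i).toNat, by omega⟩
  rw [← hT.length_eq_dist_of_isPath (hL.isPath_walk i n), length_walk]
  omega

lemma exists_pair_eq_of_adj (hL : T.IsGeodesicLine L) (hT : T.IsAcyclic) {a b : ℤ}
    (hab : T.Adj (L a) (L b)) : ∃ i, ({L a, L b} : Set V) = {L i, L (i + 1)} := by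
  have h1 := dist_eq_one_iff_adj.mpr hab
  rw [hL.dist_eq hT] at h1
  rcases (show b = a + 1 ∨ a = b + 1 by omega) with rfl | rfl
  · exact ⟨a, rfl⟩
  · exact ⟨b, Set.pair_comm _ _⟩

lemma eq_of_dist_eq_of_adj (hL : T.IsGeodesicLine L) (hT : T.IsAcyclic) {u v w w' : V}
    (hu : u ∈ Set.range L) (hv : v ∈ Set.range L) (hw : w ∈ Set.range L)
    (hw' : w' ∈ Set.range L) (huv : T.Adj u v) (hdu : T.dist u w = T.dist u w')
    (hdv : T.dist v w = T.dist v w') : w = w' := by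
  obtain ⟨a, rfl⟩ := hu
  obtain ⟨b, rfl⟩ := hv
  obtain ⟨m, rfl⟩ := hw
  obtain ⟨n, rfl⟩ := hw'
  have hab := dist_eq_one_iff_adj.mpr huv
  simp only [hL.dist_eq hT] at hab hdu hdv
  congr 1
  omega

end IsGeodesicLine

section Action

variable {G : Type*} [Group G] [MulAction G V]

lemma Connected.dist_smul (hT : T.Connected)
    (hact : ∀ (g : G) (u v : V), T.Adj u v → T.Adj (g • u) (g • v)) (g : G) (u v : V) :
    T.dist (g • u) (g • v) = T.dist u v := by
  have hle : ∀ (k : G) (u v : V), T.dist (k • u) (k • v) ≤ T.dist u v := by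
    intro k u v
    obtain ⟨p, hp⟩ := hT.exists_walk_length_eq_dist u v
    rw [← hp, ← p.length_map ⟨(k • ·), hact k _ _⟩]
    exact dist_le _
  refine (hle g u v).antisymm ?_
  simpa using hle g⁻¹ (g • u) (g • v)

lemma smul_eq_smul_of_pair_eq
    (hnoinv : ∀ (g : G) (u v : V), T.Adj u v → ¬(g • u = v ∧ g • v = u)) {u v : V}
    (huv : T.Adj u v) {a b : G} (h : ({a • u, a • v} : Set V) = {b • u, b • v}) :
    a • u = b • u ∧ a • v = b • v := by
  refine (Set.pair_eq_pair_iff.mp h).resolve_right fun ⟨hu, hv⟩ => hnoinv (b⁻¹ * a) u v huv ?_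
  simp [mul_smul, hu, hv]

end Action

end SimpleGraph

open SimpleGraph in
/-- If a group `G` acts by automorphisms and without inversions on a tree `T`, `L` is a
geodesic line whose setwise stabilizer in `G` acts transitively on the geometric edges
of `L`, and `g, g'` both send the geodesic segment `[x, y]` (with `x ≠ y`) into `L`,
then there is an element `h` of the setwise stabilizer of `L` with `h • (g • z) = g' • z`
for every `z ∈ [x, y]`. -/
theorem exists_stabilizer_matching {V : Type*} {G : Type*} [Group G] [MulAction G V]
    (T : SimpleGraph V) (hT : T.IsTree)
    (hact : ∀ (g : G) (u v : V), T.Adj u v → T.Adj (g • u) (g • v))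
    (hnoinv : ∀ (g : G) (u v : V), T.Adj u v → ¬(g • u = v ∧ g • v = u))
    (L : ℤ → V) (hLinj : Function.Injective L)
    (hLadj : ∀ i : ℤ, T.Adj (L i) (L (i + 1)))
    (htrans : ∀ i j : ℤ, ∃ h : G, (fun v => h • v) '' Set.range L = Set.range L ∧
      ({h • L i, h • L (i + 1)} : Set V) = {L j, L (j + 1)})
    (x y : V) (hxy : x ≠ y) (g g' : G)
    (hg : ∀ z : V, T.dist x z + T.dist z y = T.dist x y → g • z ∈ Set.range L)
    (hg' : ∀ z : V, T.dist x z + T.dist z y = T.dist x y → g' • z ∈ Set.range L) :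
    ∃ h : G, (fun v => h • v) '' Set.range L = Set.range L ∧
      ∀ z : V, T.dist x z + T.dist z y = T.dist x y → h • g • z = g' • z := by
  have hL : T.IsGeodesicLine L := ⟨hLinj, hLadj⟩
  have hdist := hT.connected.dist_smul hact
  obtain ⟨x₁, hxx₁, hx₁⟩ := (hT.connected x y).exists_adj_dist_add_eq hxy
  have hx : T.dist x x + T.dist x y = T.dist x y := by simp
  obtain ⟨a, ha⟩ := hg x hx
  obtain ⟨b, hb⟩ := hg x₁ hx₁
  obtain ⟨a', ha'⟩ := hg' x hx
  obtain ⟨b', hb'⟩ := hg' x₁ hx₁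
  obtain ⟨i, hi⟩ := hL.exists_pair_eq_of_adj hT.isAcyclic (ha ▸ hb ▸ hact g x x₁ hxx₁)
  obtain ⟨i', hi'⟩ := hL.exists_pair_eq_of_adj hT.isAcyclic (ha' ▸ hb' ▸ hact g' x x₁ hxx₁)
  obtain ⟨h, hhL, hhi⟩ := htrans i i'
  have hedge : ({(h * g) • x, (h * g) • x₁} : Set V) = {g' • x, g' • x₁} := by
    rw [mul_smul, mul_smul, ← ha, ← hb, ← ha', ← hb', ← Set.image_pair, hi, Set.image_pair,
      hhi, hi']
  obtain ⟨hhx, hhx₁⟩ := smul_eq_smul_of_pair_eq hnoinv hxx₁ hedge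
  refine ⟨h, hhL, fun z hz => ?_⟩
  have hhgz : h • g • z ∈ Set.range L := hhL ▸ Set.mem_image_of_mem _ (hg z hz)
  refine hL.eq_of_dist_eq_of_adj hT.isAcyclic ⟨a', ha'⟩ ⟨b', hb'⟩ hhgz (hg' z hz)
    (hact g' x x₁ hxx₁) ?_ ?_
  · rw [hdist, ← hhx, mul_smul, hdist, hdist]
  · rw [hdist, ← hhx₁, mul_smul, hdist, hdist]
end

section
/- Let G be a group acting by automorphisms and without inversions on a tree T, and let L be a geodesic line in T such that (i) for all vertices x, y of T there exists g ∈ G with g·[x,y] ⊆ L(ℤ), and (ii) the setwise stabilizer H of L in G acts transitively on the geometric edges of L. Then for every n ≥ 0 the restriction map f ↦ f|_{L(ℤ)^{n+1}} is a linear isomorphism from the space of G-invariant bounded alternating real-valued functions on V(T)^{n+1} that vanish on non-aligned tuples, onto the space of H-invariant bounded alternating real-valued functions on L(ℤ)^{n+1}. -/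
section Aux

variable {V : Type*} {G : Type*} [Group G] [MulAction G V] {T : SimpleGraph V}

/-- The walk along the line `L` from `L a` to `L (a+m)`. -/
def lineWalk (L : ℤ → V) (hLadj : ∀ i : ℤ, T.Adj (L i) (L (i + 1))) :
    (m : ℕ) → (a : ℤ) → T.Walk (L a) (L (a + m))
  | 0, a => SimpleGraph.Walk.nil.copy rfl (by rw [show a + ((0:ℕ):ℤ) = a by simp])
  | (m+1), a => ((SimpleGraph.Walk.cons (hLadj a) (lineWalk L hLadj m (a+1))).copy rfl
      (by rw [show a + 1 + (m:ℤ) = a + ((m+1 : ℕ) : ℤ) by push_cast; ring]))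

lemma lineWalk_length (L : ℤ → V) (hLadj : ∀ i : ℤ, T.Adj (L i) (L (i + 1))) :
    ∀ (m : ℕ) (a : ℤ), (lineWalk L hLadj m a).length = m
  | 0, a => by simp [lineWalk]
  | (m+1), a => by
      simp [lineWalk, lineWalk_length L hLadj m (a+1)]

lemma lineWalk_support (L : ℤ → V) (hLadj : ∀ i : ℤ, T.Adj (L i) (L (i + 1))) :
    ∀ (m : ℕ) (a : ℤ) (z : V), z ∈ (lineWalk L hLadj m a).support →
      ∃ t : ℕ, t ≤ m ∧ z = L (a + t)
  | 0, a, z => by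
      simp only [lineWalk, SimpleGraph.Walk.support_copy, SimpleGraph.Walk.support_nil,
        List.mem_singleton]
      rintro rfl; exact ⟨0, le_refl _, by simp⟩
  | (m+1), a, z => by
      simp only [lineWalk, SimpleGraph.Walk.support_copy, SimpleGraph.Walk.support_cons,
        List.mem_cons]
      rintro (rfl | hz)
      · exact ⟨0, by omega, by simp⟩
      · obtain ⟨t, ht, rfl⟩ := lineWalk_support L hLadj m (a+1) z hz
        exact ⟨t + 1, by omega, by push_cast; ring_nf⟩

lemma lineWalk_isPath (L : ℤ → V) (hLinj : Function.Injective L)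
    (hLadj : ∀ i : ℤ, T.Adj (L i) (L (i + 1))) :
    ∀ (m : ℕ) (a : ℤ), (lineWalk L hLadj m a).IsPath
  | 0, a => by simp [lineWalk]
  | (m+1), a => by
      simp only [lineWalk, SimpleGraph.Walk.isPath_copy]
      refine (lineWalk_isPath L hLinj hLadj m (a+1)).cons ?_
      intro hmem
      obtain ⟨t, _, hz⟩ := lineWalk_support L hLadj m (a+1) _ hmem
      have := hLinj hz
      omega

end Aux

section Aux2
variable {V : Type*} {G : Type*} [Group G] [MulAction G V] {T : SimpleGraph V}

/-- In a tree, every path realizes the distance. -/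
lemma isPath_length_eq_dist (hT : T.IsTree) {u v : V} (p : T.Walk u v) (hp : p.IsPath) :
    p.length = T.dist u v := by
  obtain ⟨q, hq⟩ := hT.isConnected.exists_walk_length_eq_dist u v
  have hqp : q.IsPath := q.isPath_of_length_eq_dist hq
  obtain ⟨r, _, hun⟩ := hT.existsUnique_path u v
  rw [hun p hp, ← hun q hqp] at *
  exact hq

lemma dist_line (hT : T.IsTree) {L : ℤ → V} (hLinj : Function.Injective L)
    (hLadj : ∀ i : ℤ, T.Adj (L i) (L (i + 1))) (a b : ℤ) :
    T.dist (L a) (L b) = (b - a).natAbs := by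
  wlog hab : a ≤ b generalizing a b
  · rw [SimpleGraph.dist_comm, this b a (by omega)]; omega
  have hb : b = a + ((b - a).toNat : ℤ) := by omega
  have h1 := isPath_length_eq_dist hT
      ((lineWalk L hLadj (b - a).toNat a).copy rfl (by rw [← hb]))
      (by simpa using lineWalk_isPath L hLinj hLadj _ _)
  simp only [SimpleGraph.Walk.length_copy, lineWalk_length] at h1
  omega

lemma exists_line_path {L : ℤ → V} (hLinj : Function.Injective L)
    (hLadj : ∀ i : ℤ, T.Adj (L i) (L (i + 1))) (a b : ℤ) :
    ∃ w : T.Walk (L a) (L b), w.IsPath ∧ ∀ z ∈ w.support, z ∈ Set.range L := by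
  rcases le_total a b with hab | hab
  · have hb : b = a + ((b - a).toNat : ℤ) := by omega
    refine ⟨(lineWalk L hLadj (b - a).toNat a).copy rfl (by rw [← hb]),
      by simpa using lineWalk_isPath L hLinj hLadj _ _, ?_⟩
    intro z hz
    simp only [SimpleGraph.Walk.support_copy] at hz
    obtain ⟨t, _, rfl⟩ := lineWalk_support L hLadj _ _ _ hz
    exact ⟨a + t, rfl⟩
  · have ha : a = b + ((a - b).toNat : ℤ) := by omega
    refine ⟨((lineWalk L hLadj (a - b).toNat b).copy rfl (by rw [← ha])).reverse,
      (by simpa using lineWalk_isPath L hLinj hLadj _ _ : ((lineWalk L hLadj (a - b).toNat b).copy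
        rfl (by rw [← ha])).IsPath).reverse, ?_⟩
    intro z hz
    simp only [SimpleGraph.Walk.support_reverse, List.mem_reverse,
      SimpleGraph.Walk.support_copy] at hz
    obtain ⟨t, _, rfl⟩ := lineWalk_support L hLadj _ _ _ hz
    exact ⟨b + t, rfl⟩

/-- In a tree, any point between two points of the line lies on the line. -/
lemma seg_mem_range (hT : T.IsTree) {L : ℤ → V} (hLinj : Function.Injective L)
    (hLadj : ∀ i : ℤ, T.Adj (L i) (L (i + 1))) (a b : ℤ) (z : V)
    (hz : T.dist (L a) z + T.dist z (L b) = T.dist (L a) (L b)) : z ∈ Set.range L := by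
  obtain ⟨w₁, hw₁⟩ := hT.isConnected.exists_walk_length_eq_dist (L a) z
  obtain ⟨w₂, hw₂⟩ := hT.isConnected.exists_walk_length_eq_dist z (L b)
  have hlen : (w₁.append w₂).length = T.dist (L a) (L b) := by
    rw [SimpleGraph.Walk.length_append, hw₁, hw₂, hz]
  have hwp : (w₁.append w₂).IsPath := (w₁.append w₂).isPath_of_length_eq_dist hlen
  obtain ⟨lw, hlwp, hlwsup⟩ := exists_line_path hLinj hLadj a b
  obtain ⟨r, _, hun⟩ := hT.existsUnique_path (L a) (L b)
  have heq : w₁.append w₂ = lw := by rw [hun _ hwp, hun _ hlwp]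
  have hzmem : z ∈ (w₁.append w₂).support := by
    rw [SimpleGraph.Walk.mem_support_append_iff]
    exact Or.inl w₁.end_mem_support
  rw [heq] at hzmem
  exact hlwsup z hzmem

lemma smul_dist (hT : T.IsTree)
    (hact : ∀ (g : G) (u v : V), T.Adj u v → T.Adj (g • u) (g • v))
    (g : G) (u v : V) : T.dist (g • u) (g • v) = T.dist u v := by
  have key : ∀ (g : G) (u v : V), T.dist (g • u) (g • v) ≤ T.dist u v := by
    intro g u v
    obtain ⟨p, hp⟩ := hT.isConnected.exists_walk_length_eq_dist u v
    let φ : T →g T := ⟨fun x => g • x, fun h => hact g _ _ h⟩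
    have := SimpleGraph.dist_le (p.map φ)
    rwa [SimpleGraph.Walk.length_map, hp] at this
  refine le_antisymm (key g u v) ?_
  have := key g⁻¹ (g • u) (g • v)
  simpa using this

end Aux2

section Aux3
variable {V : Type*} {G : Type*} [Group G] [MulAction G V] {T : SimpleGraph V}

lemma adj_line (hT : T.IsTree) {L : ℤ → V} (hLinj : Function.Injective L)
    (hLadj : ∀ i : ℤ, T.Adj (L i) (L (i + 1))) {p q : ℤ} (h : T.Adj (L p) (L q)) :
    q = p + 1 ∨ q = p - 1 := by
  have hd : T.dist (L p) (L q) = 1 := SimpleGraph.dist_eq_one_iff_adj.mpr h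
  rw [dist_line hT hLinj hLadj] at hd
  omega

/-- Claim C: if `g` maps an edge of `L` into `L`, some element of the stabilizer of `L`
agrees with `g` on that edge. -/
lemma claimC (hT : T.IsTree)
    (hact : ∀ (g : G) (u v : V), T.Adj u v → T.Adj (g • u) (g • v))
    (hnoinv : ∀ (g : G) (u v : V), T.Adj u v → ¬(g • u = v ∧ g • v = u))
    {L : ℤ → V} (hLinj : Function.Injective L)
    (hLadj : ∀ i : ℤ, T.Adj (L i) (L (i + 1)))
    (hii : ∀ i j : ℤ, ∃ h : G, (fun v => h • v) '' Set.range L = Set.range L ∧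
      ({h • L i, h • L (i + 1)} : Set V) = {L j, L (j + 1)})
    (g : G) (i p q : ℤ) (hp : g • L i = L p) (hq : g • L (i+1) = L q) :
    ∃ h : G, ((fun v => h • v) '' Set.range L = Set.range L) ∧
      h • L i = L p ∧ h • L (i+1) = L q := by
  have hadj : T.Adj (L p) (L q) := by
    rw [← hp, ← hq]; exact hact g _ _ (hLadj i)
  have hpq : q = p + 1 ∨ q = p - 1 := adj_line hT hLinj hLadj hadj
  have hLne : ∀ s t : ℤ, s ≠ t → L s ≠ L t := fun s t hst he => hst (hLinj he)
  -- j is the smaller index of the target edge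
  obtain ⟨j, hj⟩ : ∃ j : ℤ, ({L p, L q} : Set V) = {L j, L (j+1)} ∧
      (p = j ∧ q = j + 1 ∨ p = j + 1 ∧ q = j) := by
    rcases hpq with rfl | h'
    · exact ⟨p, by constructor <;> simp⟩
    · refine ⟨q, ?_, by omega⟩
      rw [Set.pair_comm]
      congr 1
      rw [show q + 1 = p by omega]
  obtain ⟨h, hH, hpair⟩ := hii i j
  rw [← hj.1] at hpair
  -- determine the pairing of h
  have h1 : h • L i = L p ∨ h • L i = L q := by
    have : h • L i ∈ ({L p, L q} : Set V) := by
      rw [← hpair]; exact Set.mem_insert _ _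
    simpa using this
  have h2 : h • L (i+1) = L p ∨ h • L (i+1) = L q := by
    have : h • L (i+1) ∈ ({L p, L q} : Set V) := by
      rw [← hpair]; exact Set.mem_insert_of_mem _ rfl
    simpa using this
  have hne : h • L i ≠ h • L (i+1) := by
    intro he
    exact hLne i (i+1) (by omega) (smul_left_cancel h he)
  have hpne : L p ≠ L q := hLne p q (by omega)
  rcases h1 with h1 | h1
  · refine ⟨h, hH, h1, ?_⟩
    rcases h2 with h2 | h2
    · exact absurd (h1.trans h2.symm) hne
    · exact h2
  · -- bad pairing: h • L i = L q, h • L (i+1) = L p; contradiction with no inversions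
    exfalso
    have h2 : h • L (i+1) = L p := by
      rcases h2 with h2 | h2
      · exact h2
      · exact absurd (h1.trans h2.symm) hne
    refine hnoinv (h⁻¹ * g) (L i) (L (i+1)) (hLadj i) ⟨?_, ?_⟩
    · rw [mul_smul, hp, ← h2, inv_smul_smul]
    · rw [mul_smul, hq, ← h1, inv_smul_smul]

/-- If `g` maps `L [a,b]` into the range of `L`, it does so affinely. -/
lemma affine_on_interval (hT : T.IsTree)
    (hact : ∀ (g : G) (u v : V), T.Adj u v → T.Adj (g • u) (g • v))
    {L : ℤ → V} (hLinj : Function.Injective L)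
    (hLadj : ∀ i : ℤ, T.Adj (L i) (L (i + 1)))
    (g : G) (a b : ℤ) (hab : a < b)
    (hmaps : ∀ k : ℤ, a ≤ k → k ≤ b → g • L k ∈ Set.range L) :
    ∃ s ε : ℤ, (ε = 1 ∨ ε = -1) ∧
      ∀ k : ℤ, a ≤ k → k ≤ b → g • L k = L (s + ε * (k - a)) := by
  classical
  -- choose index function
  have hσ : ∀ k : ℤ, a ≤ k → k ≤ b → ∃ m : ℤ, g • L k = L m := by
    intro k h1 h2
    obtain ⟨m, hm⟩ := hmaps k h1 h2
    exact ⟨m, hm.symm⟩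
  choose! σ hσ' using hσ
  have hdist : ∀ k k' : ℤ, a ≤ k → k ≤ b → a ≤ k' → k' ≤ b →
      (σ k - σ k').natAbs = (k - k').natAbs := by
    intro k k' h1 h2 h3 h4
    have : T.dist (L (σ k)) (L (σ k')) = T.dist (L k) (L k') := by
      rw [← hσ' k h1 h2, ← hσ' k' h3 h4, smul_dist hT hact]
    rw [dist_line hT hLinj hLadj, dist_line hT hLinj hLadj] at this
    omega
  -- the sign
  have hD : (σ b - σ a).natAbs = (b - a).natAbs := hdist b a (le_of_lt hab) le_rfl le_rfl (le_of_lt hab)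
  rcases le_or_gt (σ a) (σ b) with hsgn | hsgn
  · refine ⟨σ a, 1, Or.inl rfl, ?_⟩
    intro k h1 h2
    rw [hσ' k h1 h2]
    congr 1
    have e1 := hdist k a h1 h2 le_rfl (le_of_lt hab)
    have e2 := hdist b k (le_of_lt hab) le_rfl h1 h2
    omega
  · refine ⟨σ a, -1, Or.inr rfl, ?_⟩
    intro k h1 h2
    rw [hσ' k h1 h2]
    congr 1
    have e1 := hdist k a h1 h2 le_rfl (le_of_lt hab)
    have e2 := hdist b k (le_of_lt hab) le_rfl h1 h2
    omega

end Aux3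

section Aux4
variable {V : Type*} {G : Type*} [Group G] [MulAction G V] {T : SimpleGraph V}

lemma stab_inv {S : Set V} {h : G} (hH : (fun v => h • v) '' S = S) :
    (fun v => h⁻¹ • v) '' S = S := by
  conv_lhs => rw [← hH]
  rw [← Set.image_comp]
  simp [Function.comp_def]

lemma stab_mul {S : Set V} {h₁ h₂ : G} (h1 : (fun v => h₁ • v) '' S = S)
    (h2 : (fun v => h₂ • v) '' S = S) :
    (fun v => (h₁ * h₂) • v) '' S = S := by
  have : (fun v => (h₁ * h₂) • v) '' S = (fun v => h₁ • v) '' ((fun v => h₂ • v) '' S) := by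
    rw [← Set.image_comp]
    simp [Function.comp_def, mul_smul]
  rw [this, h2, h1]

lemma stab_maps {S : Set V} {h : G} (hH : (fun v => h • v) '' S = S) {z : V} (hz : z ∈ S) :
    h • z ∈ S := by
  rw [← hH]; exact ⟨z, hz, rfl⟩

/-- Claim CD: an element mapping a nondegenerate interval of `L` into `L` agrees on that
interval with an element of the setwise stabilizer of `L`. -/
lemma claimCD (hT : T.IsTree)
    (hact : ∀ (g : G) (u v : V), T.Adj u v → T.Adj (g • u) (g • v))
    (hnoinv : ∀ (g : G) (u v : V), T.Adj u v → ¬(g • u = v ∧ g • v = u))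
    {L : ℤ → V} (hLinj : Function.Injective L)
    (hLadj : ∀ i : ℤ, T.Adj (L i) (L (i + 1)))
    (hii : ∀ i j : ℤ, ∃ h : G, (fun v => h • v) '' Set.range L = Set.range L ∧
      ({h • L i, h • L (i + 1)} : Set V) = {L j, L (j + 1)})
    (g : G) (a b : ℤ) (hab : a < b)
    (hmaps : ∀ k : ℤ, a ≤ k → k ≤ b → g • L k ∈ Set.range L) :
    ∃ h : G, ((fun v => h • v) '' Set.range L = Set.range L) ∧
      ∀ k : ℤ, a ≤ k → k ≤ b → h • L k = g • L k := by
  obtain ⟨s, ε, hε, haff⟩ := affine_on_interval hT hact hLinj hLadj g a b hab hmaps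
  have hga : g • L a = L s := by
    rw [haff a le_rfl (le_of_lt hab)]; ring_nf
  have hga1 : g • L (a+1) = L (s + ε) := by
    rw [haff (a+1) (by omega) (by omega)]; ring_nf
  obtain ⟨h, hH, hha, hha1⟩ := claimC hT hact hnoinv hLinj hLadj hii g a s (s + ε) hga hga1
  have hhmaps : ∀ k : ℤ, a ≤ k → k ≤ b → h • L k ∈ Set.range L := by
    intro k _ _
    exact stab_maps hH ⟨k, rfl⟩
  obtain ⟨s', ε', hε', haff'⟩ := affine_on_interval hT hact hLinj hLadj h a b hab hhmaps
  have hs : s' = s := by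
    have := haff' a le_rfl (le_of_lt hab)
    rw [hha] at this
    have := hLinj this
    omega
  have he : ε' = ε := by
    have := haff' (a+1) (by omega) (by omega)
    rw [hha1] at this
    have := hLinj this
    omega
  refine ⟨h, hH, ?_⟩
  intro k h1 h2
  rw [haff' k h1 h2, haff k h1 h2, hs, he]

lemma no_triangle (hT : T.IsTree) {x y z : V} (h1 : T.Adj x y) (h2 : T.Adj y z)
    (h3 : T.Adj x z) : False := by
  have hp1 : (SimpleGraph.Walk.cons h3 SimpleGraph.Walk.nil).IsPath := by
    simp [SimpleGraph.Walk.isPath_def, h3.ne]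
  have hp2 : (SimpleGraph.Walk.cons h1 (SimpleGraph.Walk.cons h2 SimpleGraph.Walk.nil)).IsPath := by
    simp [SimpleGraph.Walk.isPath_def, h1.ne, h2.ne, h3.ne]
  obtain ⟨r, _, hun⟩ := hT.existsUnique_path x z
  have := (hun _ hp1).trans (hun _ hp2).symm
  have := congrArg SimpleGraph.Walk.length this
  simp at this

/-- Lemma P: if some element of `G` maps `L i` to `L j`, then so does some element
of the setwise stabilizer of `L`. -/
lemma pointLemma (hT : T.IsTree)
    (hact : ∀ (g : G) (u v : V), T.Adj u v → T.Adj (g • u) (g • v))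
    (hnoinv : ∀ (g : G) (u v : V), T.Adj u v → ¬(g • u = v ∧ g • v = u))
    {L : ℤ → V} (hLinj : Function.Injective L)
    (hLadj : ∀ i : ℤ, T.Adj (L i) (L (i + 1)))
    (hi : ∀ x y : V, ∃ g : G,
      ∀ z : V, T.dist x z + T.dist z y = T.dist x y → g • z ∈ Set.range L)
    (hii : ∀ i j : ℤ, ∃ h : G, (fun v => h • v) '' Set.range L = Set.range L ∧
      ({h • L i, h • L (i + 1)} : Set V) = {L j, L (j + 1)})
    (γ : G) (i j : ℤ) (hγ : γ • L i = L j) :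
    ∃ h : G, ((fun v => h • v) '' Set.range L = Set.range L) ∧ h • L i = L j := by
  set w := γ • L (i+1) with hw
  have hadjw : T.Adj (L j) w := by
    rw [← hγ, hw]; exact hact γ _ _ (hLadj i)
  by_cases hwe : w = L (j-1)
  · obtain ⟨h, hH, hh1, _⟩ := claimC hT hact hnoinv hLinj hLadj hii γ i j (j-1) hγ (by rw [← hwe])
    exact ⟨h, hH, hh1⟩
  · -- the triple (L (j-1), L j, w) is aligned
    have hadj' : T.Adj (L (j-1)) (L j) := by
      have := hLadj (j-1)
      rwa [show j - 1 + 1 = j by ring] at this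
    have hd1 : T.dist (L (j-1)) (L j) = 1 := SimpleGraph.dist_eq_one_iff_adj.mpr hadj'
    have hd2 : T.dist (L j) w = 1 := SimpleGraph.dist_eq_one_iff_adj.mpr hadjw
    have hd3 : T.dist (L (j-1)) w = 2 := by
      have hle : T.dist (L (j-1)) w ≤ 2 := by
        have := hT.isConnected.dist_triangle (u := L (j-1)) (v := L j) (w := w)
        omega
      have hne0 : T.dist (L (j-1)) w ≠ 0 := by
        intro h0
        exact hwe (hT.isConnected.dist_eq_zero_iff.mp h0).symm
      have hne1 : T.dist (L (j-1)) w ≠ 1 := by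
        intro h
        exact no_triangle hT hadj' hadjw (SimpleGraph.dist_eq_one_iff_adj.mp h)
      omega
    obtain ⟨g, hg⟩ := hi (L (j-1)) w
    have hm1 : g • L (j-1) ∈ Set.range L := hg _ (by rw [SimpleGraph.dist_self]; omega)
    have hm2 : g • L j ∈ Set.range L := hg _ (by omega)
    have hm3 : g • w ∈ Set.range L := by
      refine hg _ ?_
      rw [SimpleGraph.dist_self, hd3]
    obtain ⟨p₀, hp₀⟩ := hm1
    obtain ⟨q₀, hq₀⟩ := hm2
    obtain ⟨r₀, hr₀⟩ := hm3
    -- h₂ agrees with g on the edge (j-1, j)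
    obtain ⟨h₂, hH₂, hh₂a, hh₂b⟩ := claimC hT hact hnoinv hLinj hLadj hii g (j-1) p₀ q₀
      hp₀.symm (by rw [show j - 1 + 1 = j by ring]; exact hq₀.symm)
    -- h₁ agrees with g * γ on the edge (i, i+1)
    obtain ⟨h₁, hH₁, hh₁a, _⟩ := claimC hT hact hnoinv hLinj hLadj hii (g * γ) i q₀ r₀
      (by rw [mul_smul, hγ]; exact hq₀.symm) (by rw [mul_smul, ← hw]; exact hr₀.symm)
    refine ⟨h₂⁻¹ * h₁, stab_mul (stab_inv hH₂) hH₁, ?_⟩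
    rw [mul_smul, hh₁a, ← (by rw [show j - 1 + 1 = j by ring] at hh₂b; exact hh₂b : h₂ • L j = L q₀),
      inv_smul_smul]

end Aux4

section Aux5
variable {V : Type*} {G : Type*} [Group G] [MulAction G V] {T : SimpleGraph V}

/-- Lemma E: if `γ ∈ G` maps a tuple of points of `L` to another tuple of points of `L`,
then some element of the setwise stabilizer of `L` does the same. -/
lemma lemmaE (hT : T.IsTree)
    (hact : ∀ (g : G) (u v : V), T.Adj u v → T.Adj (g • u) (g • v))
    (hnoinv : ∀ (g : G) (u v : V), T.Adj u v → ¬(g • u = v ∧ g • v = u))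
    {L : ℤ → V} (hLinj : Function.Injective L)
    (hLadj : ∀ i : ℤ, T.Adj (L i) (L (i + 1)))
    (hi : ∀ x y : V, ∃ g : G,
      ∀ z : V, T.dist x z + T.dist z y = T.dist x y → g • z ∈ Set.range L)
    (hii : ∀ i j : ℤ, ∃ h : G, (fun v => h • v) '' Set.range L = Set.range L ∧
      ({h • L i, h • L (i + 1)} : Set V) = {L j, L (j + 1)})
    {n : ℕ} (x y : Fin (n+1) → V) (γ : G)
    (hx : ∀ k, x k ∈ Set.range L) (hy : ∀ k, y k ∈ Set.range L)
    (hxy : ∀ k, γ • x k = y k) :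
    ∃ h : G, ((fun v => h • v) '' Set.range L = Set.range L) ∧ ∀ k, h • x k = y k := by
  classical
  choose p hp using hx
  by_cases hconst : ∀ k, p k = p 0
  · obtain ⟨j, hj⟩ := hy 0
    obtain ⟨h, hH, hh⟩ := pointLemma hT hact hnoinv hLinj hLadj hi hii γ (p 0) j
      (by rw [hp 0, hxy 0, hj])
    refine ⟨h, hH, fun k => ?_⟩
    have hxk : x k = L (p 0) := by rw [← hp k, hconst k]
    have hx0 : x 0 = L (p 0) := (hp 0).symm
    have hyk : y k = L j := by rw [← hxy k, hxk, ← hx0, hxy 0, ← hj]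
    rw [hxk, hh, hyk]
  · push_neg at hconst
    obtain ⟨k₀, hk₀⟩ := hconst
    set S : Finset ℤ := Finset.image p Finset.univ with hS
    have hSne : S.Nonempty := ⟨p 0, Finset.mem_image_of_mem p (Finset.mem_univ 0)⟩
    set a := S.min' hSne with ha
    set b := S.max' hSne with hb
    have hmem : ∀ k, a ≤ p k ∧ p k ≤ b := fun k =>
      ⟨S.min'_le _ (Finset.mem_image_of_mem p (Finset.mem_univ k)),
       S.le_max' _ (Finset.mem_image_of_mem p (Finset.mem_univ k))⟩
    have hab : a < b := by
      rcases lt_or_ge a b with h' | h'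
      · exact h'
      · exfalso
        have h0 := hmem 0
        have h1 := hmem k₀
        omega
    obtain ⟨ka, hka⟩ : ∃ k, p k = a := by
      obtain ⟨k, _, hk⟩ := Finset.mem_image.mp (S.min'_mem hSne)
      exact ⟨k, hk⟩
    obtain ⟨kb, hkb⟩ : ∃ k, p k = b := by
      obtain ⟨k, _, hk⟩ := Finset.mem_image.mp (S.max'_mem hSne)
      exact ⟨k, hk⟩
    obtain ⟨a₂, ha₂⟩ := hy ka
    obtain ⟨b₂, hb₂⟩ := hy kb
    have hγa : γ • L a = L a₂ := by rw [← hka, hp ka, hxy ka, ha₂]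
    have hγb : γ • L b = L b₂ := by rw [← hkb, hp kb, hxy kb, hb₂]
    have hmaps : ∀ m : ℤ, a ≤ m → m ≤ b → γ • L m ∈ Set.range L := by
      intro m h1 h2
      refine seg_mem_range hT hLinj hLadj a₂ b₂ (γ • L m) ?_
      rw [← hγa, ← hγb, smul_dist hT hact, smul_dist hT hact, smul_dist hT hact,
        dist_line hT hLinj hLadj, dist_line hT hLinj hLadj, dist_line hT hLinj hLadj]
      omega
    obtain ⟨h, hH, hagr⟩ := claimCD hT hact hnoinv hLinj hLadj hii γ a b hab hmaps
    refine ⟨h, hH, fun k => ?_⟩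
    rw [← hp k, hagr (p k) (hmem k).1 (hmem k).2, hp k, hxy k]

/-- Lemma K: a stabilizer-invariant function on tuples of the line is invariant under
partially defined translations coming from `G`. -/
lemma lemmaK (hT : T.IsTree)
    (hact : ∀ (g : G) (u v : V), T.Adj u v → T.Adj (g • u) (g • v))
    (hnoinv : ∀ (g : G) (u v : V), T.Adj u v → ¬(g • u = v ∧ g • v = u))
    {L : ℤ → V} (hLinj : Function.Injective L)
    (hLadj : ∀ i : ℤ, T.Adj (L i) (L (i + 1)))
    (hi : ∀ x y : V, ∃ g : G,
      ∀ z : V, T.dist x z + T.dist z y = T.dist x y → g • z ∈ Set.range L)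
    (hii : ∀ i j : ℤ, ∃ h : G, (fun v => h • v) '' Set.range L = Set.range L ∧
      ({h • L i, h • L (i + 1)} : Set V) = {L j, L (j + 1)})
    {n : ℕ} (φ : (Fin (n+1) → Set.range L) → ℝ)
    (hφ : ∀ h : G, (fun v => h • v) '' Set.range L = Set.range L →
      ∀ x y : Fin (n+1) → Set.range L, (∀ k, (y k : V) = h • (x k : V)) → φ y = φ x)
    (xs ys : Fin (n+1) → Set.range L) (γ : G)
    (hxy : ∀ k, γ • (xs k : V) = (ys k : V)) : φ ys = φ xs := by
  obtain ⟨h, hH, hagr⟩ := lemmaE hT hact hnoinv hLinj hLadj hi hii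
    (fun k => (xs k : V)) (fun k => (ys k : V)) γ (fun k => (xs k).2) (fun k => (ys k).2) hxy
  exact hφ h hH xs ys (fun k => (hagr k).symm)

end Aux5



/-- Restriction to the line `L` is a (linear) isomorphism from the space of bounded
alternating `G`-invariant real functions on `V^{n+1}` supported on aligned tuples onto
the space of bounded alternating functions on `L(ℤ)^{n+1}` invariant under the setwise
stabilizer of `L`. -/
theorem restriction_bijOn_aligned_invariant {V : Type*} {G : Type*} [Group G] [MulAction G V]
    (T : SimpleGraph V) (hT : T.IsTree)
    (hact : ∀ (g : G) (u v : V), T.Adj u v → T.Adj (g • u) (g • v))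
    (hnoinv : ∀ (g : G) (u v : V), T.Adj u v → ¬(g • u = v ∧ g • v = u))
    (L : ℤ → V) (hLinj : Function.Injective L)
    (hLadj : ∀ i : ℤ, T.Adj (L i) (L (i + 1)))
    (hi : ∀ x y : V, ∃ g : G,
      ∀ z : V, T.dist x z + T.dist z y = T.dist x y → g • z ∈ Set.range L)
    (hii : ∀ i j : ℤ, ∃ h : G, (fun v => h • v) '' Set.range L = Set.range L ∧
      ({h • L i, h • L (i + 1)} : Set V) = {L j, L (j + 1)})
    (n : ℕ) :
    Set.BijOn
      (fun (f : (Fin (n + 1) → V) → ℝ) (x : Fin (n + 1) → Set.range L) =>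
        f (fun k => (x k : V)))
      {f : (Fin (n + 1) → V) → ℝ |
        (∃ Cf : ℝ, ∀ x, |f x| ≤ Cf) ∧
        (∀ (π : Equiv.Perm (Fin (n + 1))) (x : Fin (n + 1) → V),
          f (x ∘ π) = ((Equiv.Perm.sign π : ℤ) : ℝ) * f x) ∧
        (∀ (g : G) (x : Fin (n + 1) → V), f (fun k => g • x k) = f x) ∧
        (∀ x : Fin (n + 1) → V,
          ¬(∃ a b : V, ∀ k, T.dist a (x k) + T.dist (x k) b = T.dist a b) → f x = 0)}
      {f : (Fin (n + 1) → Set.range L) → ℝ |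
        (∃ Cf : ℝ, ∀ x, |f x| ≤ Cf) ∧
        (∀ (π : Equiv.Perm (Fin (n + 1))) (x : Fin (n + 1) → Set.range L),
          f (x ∘ π) = ((Equiv.Perm.sign π : ℤ) : ℝ) * f x) ∧
        (∀ h : G, (fun v => h • v) '' Set.range L = Set.range L →
          ∀ x y : Fin (n + 1) → Set.range L,
            (∀ k, (y k : V) = h • (x k : V)) → f y = f x)} := by
  classical
  refine ⟨?_, ?_, ?_⟩
  · -- MapsTo
    rintro f ⟨⟨Cf, hC⟩, halt, hinv, -⟩
    refine ⟨⟨Cf, fun x => hC _⟩, ?_, ?_⟩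
    · intro π x
      have := halt π (fun k => (x k : V))
      simpa only [Function.comp_def] using this
    intro h _ xs ys hk
    simp only
    have : (fun k => (ys k : V)) = fun k => h • (xs k : V) := funext hk
    rw [this]
    exact hinv h _
  · -- InjOn
    rintro f₁ ⟨-, -, hinv₁, hvan₁⟩ f₂ ⟨-, -, hinv₂, hvan₂⟩ heq
    funext x
    by_cases hal : ∃ a b : V, ∀ k, T.dist a (x k) + T.dist (x k) b = T.dist a b
    · obtain ⟨a, b, hab⟩ := hal
      obtain ⟨g, hg⟩ := hi a b
      have hm : ∀ k, g • x k ∈ Set.range L := fun k => hg _ (hab k)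
      have key := congrFun heq (fun k => (⟨g • x k, hm k⟩ : Set.range L))
      calc f₁ x = f₁ (fun k => g • x k) := (hinv₁ g x).symm
        _ = f₂ (fun k => g • x k) := key
        _ = f₂ x := hinv₂ g x
    · rw [hvan₁ x hal, hvan₂ x hal]
  · -- SurjOn
    rintro φ ⟨⟨Cφ, hCφ⟩, hφalt, hφinv⟩
    choose gg hgg using hi
    set f : (Fin (n + 1) → V) → ℝ := fun x =>
      if hal : ∃ a b : V, ∀ k, T.dist a (x k) + T.dist (x k) b = T.dist a b then
        φ (fun k => ⟨gg hal.choose hal.choose_spec.choose • x k,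
          hgg _ _ _ (hal.choose_spec.choose_spec k)⟩)
      else 0 with hf
    have fspec0 : ∀ x, ¬(∃ a b : V, ∀ k, T.dist a (x k) + T.dist (x k) b = T.dist a b) →
        f x = 0 := by
      intro x hal
      rw [hf]
      simp only [dif_neg hal]
    have fspec1 : ∀ (x : Fin (n + 1) → V)
        (hal : ∃ a b : V, ∀ k, T.dist a (x k) + T.dist (x k) b = T.dist a b)
        (g : G) (hgx : ∀ k, g • x k ∈ Set.range L),
        f x = φ (fun k => ⟨g • x k, hgx k⟩) := by
      intro x hal g hgx
      rw [hf]
      simp only [dif_pos hal]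
      refine lemmaK hT hact hnoinv hLinj hLadj
        (fun x y => ⟨gg x y, hgg x y⟩) hii φ hφinv _ _
        (gg hal.choose hal.choose_spec.choose * g⁻¹) ?_
      intro k
      show (_ : V) = _
      rw [mul_smul]
      simp
    have hCφ0 : (0 : ℝ) ≤ Cφ := le_trans (abs_nonneg _) (hCφ (fun _ => ⟨L 0, 0, rfl⟩))
    refine ⟨f, ⟨⟨Cφ, ?_⟩, ?_, ?_, fspec0⟩, ?_⟩
    · -- bounded
      intro x
      by_cases hal : ∃ a b : V, ∀ k, T.dist a (x k) + T.dist (x k) b = T.dist a b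
      · obtain ⟨a, b, hab⟩ := hal
        rw [fspec1 x ⟨a, b, hab⟩ (gg a b) (fun k => hgg a b _ (hab k))]
        exact hCφ _
      · rw [fspec0 x hal]
        simpa using hCφ0
    · -- alternating
      intro π x
      by_cases hal : ∃ a b : V, ∀ k, T.dist a (x k) + T.dist (x k) b = T.dist a b
      · obtain ⟨a, b, hab⟩ := hal
        have halπ : ∃ a b : V, ∀ k, T.dist a ((x ∘ π) k) + T.dist ((x ∘ π) k) b = T.dist a b :=
          ⟨a, b, fun k => hab (π k)⟩
        have hgx : ∀ k, gg a b • x k ∈ Set.range L := fun k => hgg a b _ (hab k)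
        have hgxπ : ∀ k, gg a b • (x ∘ π) k ∈ Set.range L := fun k => hgx (π k)
        rw [fspec1 (x ∘ π) halπ (gg a b) hgxπ, fspec1 x ⟨a, b, hab⟩ (gg a b) hgx]
        have hcomp : (fun k => (⟨gg a b • (x ∘ π) k, hgxπ k⟩ : Set.range L)) =
            (fun k => (⟨gg a b • x k, hgx k⟩ : Set.range L)) ∘ π := by
          funext k; rfl
        rw [hcomp]
        exact hφalt π _
      · have halπ : ¬∃ a b : V, ∀ k,
            T.dist a ((x ∘ π) k) + T.dist ((x ∘ π) k) b = T.dist a b := by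
          rintro ⟨a, b, hab⟩
          refine hal ⟨a, b, fun k => ?_⟩
          have := hab (π.symm k)
          simpa using this
        rw [fspec0 _ halπ, fspec0 _ hal]
        ring
    · -- G-invariance
      intro g₀ x
      by_cases hal : ∃ a b : V, ∀ k, T.dist a (x k) + T.dist (x k) b = T.dist a b
      · obtain ⟨a, b, hab⟩ := hal
        have hab' : ∀ k, T.dist (g₀ • a) ((fun k => g₀ • x k) k) +
            T.dist ((fun k => g₀ • x k) k) (g₀ • b) = T.dist (g₀ • a) (g₀ • b) := by
          intro k
          simp only
          rw [smul_dist hT hact, smul_dist hT hact, smul_dist hT hact]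
          exact hab k
        have hgx' : ∀ k, gg (g₀ • a) (g₀ • b) • ((fun k => g₀ • x k) k) ∈ Set.range L :=
          fun k => hgg _ _ _ (hab' k)
        have hgx'' : ∀ k, (gg (g₀ • a) (g₀ • b) * g₀) • x k ∈ Set.range L := by
          intro k; rw [mul_smul]; exact hgx' k
        rw [fspec1 (fun k => g₀ • x k) ⟨g₀ • a, g₀ • b, hab'⟩ (gg (g₀ • a) (g₀ • b)) hgx',
          fspec1 x ⟨a, b, hab⟩ (gg (g₀ • a) (g₀ • b) * g₀) hgx'']
        congr 1
        funext k
        exact Subtype.ext (mul_smul _ _ _).symm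
      · have halg : ¬∃ a' b' : V, ∀ k, T.dist a' ((fun k => g₀ • x k) k) +
            T.dist ((fun k => g₀ • x k) k) b' = T.dist a' b' := by
          rintro ⟨a', b', hab'⟩
          refine hal ⟨g₀⁻¹ • a', g₀⁻¹ • b', fun k => ?_⟩
          have h1 : T.dist (g₀⁻¹ • a') (x k) = T.dist a' (g₀ • x k) := by
            rw [← smul_dist hT hact g₀ (g₀⁻¹ • a') (x k)]
            simp
          have h2 : T.dist (x k) (g₀⁻¹ • b') = T.dist (g₀ • x k) b' := by
            rw [← smul_dist hT hact g₀ (x k) (g₀⁻¹ • b')]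
            simp
          have h3 : T.dist (g₀⁻¹ • a') (g₀⁻¹ • b') = T.dist a' b' := by
            rw [← smul_dist hT hact g₀ (g₀⁻¹ • a') (g₀⁻¹ • b')]
            simp
          rw [h1, h2, h3]
          exact hab' k
        rw [fspec0 _ halg, fspec0 _ hal]
    · -- restriction equals φ
      funext xs
      have hx : ∀ k, (xs k : V) ∈ Set.range L := fun k => (xs k).2
      choose p hp using hx
      have hSne : (Finset.image p Finset.univ).Nonempty :=
        ⟨p 0, Finset.mem_image_of_mem p (Finset.mem_univ 0)⟩
      have hal : ∃ a b : V, ∀ k,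
          T.dist a ((xs k : V)) + T.dist ((xs k : V)) b = T.dist a b := by
        refine ⟨L ((Finset.image p Finset.univ).min' hSne),
          L ((Finset.image p Finset.univ).max' hSne), fun k => ?_⟩
        have h1 := (Finset.image p Finset.univ).min'_le _
          (Finset.mem_image_of_mem p (Finset.mem_univ k))
        have h2 := (Finset.image p Finset.univ).le_max' _
          (Finset.mem_image_of_mem p (Finset.mem_univ k))
        rw [← hp k, dist_line hT hLinj hLadj, dist_line hT hLinj hLadj,
          dist_line hT hLinj hLadj]
        omega
      have hgx : ∀ k, (1 : G) • (xs k : V) ∈ Set.range L := by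
        intro k; rw [one_smul]; exact (xs k).2
      have hres := fspec1 (fun k => (xs k : V)) hal 1 hgx
      simp only at hres ⊢
      rw [hres]
      congr 1
      funext k
      exact Subtype.ext (one_smul _ _)
end

section
/- Let d ≥ 3, Ω = {1,…,d}, and let F' ≤ Sym(Ω) be a permutation group that is transitive but not 2-transitive. Let T be a legally colored d-regular tree. Then for every vertex x of T, the stabilizer of x in U(F') does not act transitively on the sphere {y ∈ V(T) : d(x,y) = 2}; equivalently, it does not act transitively on the set of geodesic segments of length 2 starting at x. -/
section Aux

variable {V : Type*} {T : SimpleGraph V}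

lemma tree_midpoint_unique (hT : T.IsTree) {x y a b : V}
    (hxa : T.Adj x a) (hay : T.Adj a y) (hxb : T.Adj x b) (hby : T.Adj b y)
    (hxy : x ≠ y) : a = b := by
  have hacy := hT.IsAcyclic
  rw [SimpleGraph.isAcyclic_iff_path_unique] at hacy
  let p : T.Walk x y := SimpleGraph.Walk.cons hxa (SimpleGraph.Walk.cons hay SimpleGraph.Walk.nil)
  let q : T.Walk x y := SimpleGraph.Walk.cons hxb (SimpleGraph.Walk.cons hby SimpleGraph.Walk.nil)
  have hp : p.IsPath := by
    simp [p, SimpleGraph.Walk.isPath_def, hxa.ne, hay.ne, hxy]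
  have hq : q.IsPath := by
    simp [q, SimpleGraph.Walk.isPath_def, hxb.ne, hby.ne, hxy]
  have := hacy ⟨p, hp⟩ ⟨q, hq⟩
  have hpq : p = q := congrArg Subtype.val this
  have : p.getVert 1 = q.getVert 1 := by rw [hpq]
  simpa [p, q] using this

lemma tree_not_adj (hT : T.IsTree) {x y a : V}
    (hxa : T.Adj x a) (hay : T.Adj a y) : ¬ T.Adj x y := by
  intro hxy
  have hacy := hT.IsAcyclic
  rw [SimpleGraph.isAcyclic_iff_path_unique] at hacy
  let p : T.Walk x y := SimpleGraph.Walk.cons hxa (SimpleGraph.Walk.cons hay SimpleGraph.Walk.nil)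
  let q : T.Walk x y := SimpleGraph.Walk.cons hxy SimpleGraph.Walk.nil
  have hp : p.IsPath := by
    simp [p, SimpleGraph.Walk.isPath_def, hxa.ne, hay.ne, hxy.ne]
  have hq : q.IsPath := by simp [q, SimpleGraph.Walk.isPath_def, hxy.ne]
  have := hacy ⟨p, hp⟩ ⟨q, hq⟩
  have hpq : p = q := congrArg Subtype.val this
  have : p.length = q.length := by rw [hpq]
  simp [p, q] at this

lemma tree_dist_two (hT : T.IsTree) {x y a : V}
    (hxa : T.Adj x a) (hay : T.Adj a y) (hxy : x ≠ y) : T.dist x y = 2 := by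
  have hle : T.dist x y ≤ 2 := by
    have := SimpleGraph.dist_le
      (SimpleGraph.Walk.cons hxa (SimpleGraph.Walk.cons hay SimpleGraph.Walk.nil))
    simpa using this
  have h0 : T.dist x y ≠ 0 := by
    intro h
    exact hxy (hT.isConnected.dist_eq_zero_iff.mp h)
  have h1 : T.dist x y ≠ 1 := by
    intro h
    exact tree_not_adj hT hxa hay (SimpleGraph.dist_eq_one_iff_adj.mp h)
  omega

end Aux

/-- If `F'` is transitive but not 2-transitive, then for every vertex `x` the stabilizer
of `x` in `U(F')` does not act transitively on the sphere of radius 2 around `x`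
(equivalently, on geodesic segments of length 2 starting at `x`). -/
theorem UF'_vertex_stabilizer_not_sphere2_transitive {V : Type*} (d : ℕ) (hd : 3 ≤ d)
    (F' : Subgroup (Equiv.Perm (Fin d)))
    (htrans : ∀ i j : Fin d, ∃ π ∈ F', π i = j)
    (hn2t : ¬∀ i j k l : Fin d, i ≠ j → k ≠ l → ∃ π ∈ F', π i = k ∧ π j = l)
    (T : SimpleGraph V) (hT : T.IsTree) (C : LegalColoring T d) (x : V) :
    ¬∀ y y' : V, T.dist x y = 2 → T.dist x y' = 2 →
      ∃ g ∈ USet T C F', g x = x ∧ g y = y' := by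
  intro h
  apply hn2t
  intro i j k l hij hkl
  obtain ⟨a, ⟨hxa, hcxa⟩, -⟩ := C.bij x i
  obtain ⟨y, ⟨hay, hcay⟩, -⟩ := C.bij a j
  obtain ⟨b, ⟨hxb, hcxb⟩, -⟩ := C.bij x k
  obtain ⟨y', ⟨hby, hcby⟩, -⟩ := C.bij b l
  have hcax : C.color a x = i := by rw [← C.symm hxa, hcxa]
  have hcbx : C.color b x = k := by rw [← C.symm hxb, hcxb]
  have hxy : x ≠ y := by
    rintro rfl
    rw [hcax] at hcay
    exact hij hcay
  have hxy' : x ≠ y' := by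
    rintro rfl
    rw [hcbx] at hcby
    exact hkl hcby
  obtain ⟨g, ⟨hgaut, hgloc⟩, hgx, hgy⟩ :=
    h y y' (tree_dist_two hT hxa hay hxy) (tree_dist_two hT hxb hby hxy')
  have hgadj : ∀ u v : V, T.Adj (g u) (g v) ↔ T.Adj u v := hgaut
  have hga_x : T.Adj x (g a) := by
    have := (hgadj x a).mpr hxa
    rwa [hgx] at this
  have hga_y : T.Adj (g a) y' := by
    have := (hgadj a y).mpr hay
    rwa [hgy] at this
  have hgab : g a = b := tree_midpoint_unique hT hga_x hga_y hxb hby hxy'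
  obtain ⟨π, hπF, hπ⟩ := hgloc a
  refine ⟨π, hπF, ?_, ?_⟩
  · have := hπ hxa.symm
    rw [hgx, hgab, hcbx, hcax] at this
    exact this.symm
  · have := hπ hay
    rw [hgy, hgab, hcby, hcay] at this
    exact this.symm
end
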